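/- Marginalisation extends Delgrande's forgetting to epistemic states: if κ is an OCF over Σ with Bel(κ) semantically equivalent to Γ ⊆ L_Σ, then F(Γ,P) = Bel(κ|_{Σ\P}) for every P ⊆ Σ. -/
import Mathlib


/-- Propositional formulas over atoms `ℕ`. -/
inductive Fm where
  | var : ℕ → Fm
  | top : Fm
  | bot : Fm
  | neg : Fm → Fm
  | conj : Fm → Fm → Fm
  | disj : Fm → Fm → Fm

/-- Evaluation of a formula under a total valuation. -/
def Fm.eval (v : ℕ → Bool) : Fm → Bool
  | var n => v n
  | top => true
  | bot => false
  | neg φ => !(φ.eval v)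
  | conj φ ψ => φ.eval v && ψ.eval v
  | disj φ ψ => φ.eval v || ψ.eval v

/-- The atoms mentioned in a formula. -/
def Fm.atoms : Fm → Set ℕ
  | var n => {n}
  | top => ∅
  | bot => ∅
  | neg φ => φ.atoms
  | conj φ ψ => φ.atoms ∪ ψ.atoms
  | disj φ ψ => φ.atoms ∪ ψ.atoms

/-- The language `L_S` over signature `S`: formulas mentioning only atoms in `S`. -/
def Lang (S : Set ℕ) : Set Fm := {φ | φ.atoms ⊆ S}

/-- Interpretations `Ω_S` over signature `S`. -/
def Itp (S : Set ℕ) := ↥S → Bool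

open Classical in
/-- Extend an interpretation over `S` to a total valuation (false outside `S`). -/
noncomputable def Itp.toVal {S : Set ℕ} (ω : Itp S) : ℕ → Bool :=
  fun n => if h : n ∈ S then ω ⟨n, h⟩ else false

/-- Satisfaction of a formula by an interpretation over `S`. -/
def Itp.sat {S : Set ℕ} (ω : Itp S) (φ : Fm) : Prop := φ.eval ω.toVal = true

/-- Restriction of an interpretation over `S` to a subsignature `S'`. -/
def Itp.restrict {S' S : Set ℕ} (h : S' ⊆ S) (ω : Itp S) : Itp S' :=
  fun n => ω ⟨n.1, h n.2⟩

/-- Models over `S` of a set of formulas. -/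
def Models (S : Set ℕ) (Γ : Set Fm) : Set (Itp S) := {ω | ∀ φ ∈ Γ, ω.sat φ}

/-- Semantic entailment over `S` between sets of formulas. -/
def Entails (S : Set ℕ) (Γ Δ : Set Fm) : Prop := Models S Γ ⊆ Models S Δ

/-- Consequence operator `Cn_S`. -/
def Cn (S : Set ℕ) (Γ : Set Fm) : Set Fm :=
  {φ | φ ∈ Lang S ∧ ∀ ω ∈ Models S Γ, ω.sat φ}

/-- Delgrande forgetting `F(Γ,P) = Cn_S(Γ) ∩ L_{S\P}`. -/
def Forget (S : Set ℕ) (Γ : Set Fm) (P : Set ℕ) : Set Fm :=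
  Cn S Γ ∩ Lang (S \ P)

/-- Reduction of a set of models to a subsignature. -/
def reduce {S' S : Set ℕ} (h : S' ⊆ S) (M : Set (Itp S)) : Set (Itp S') :=
  {ω' | ∃ ω ∈ M, ω.restrict h = ω'}

/-- Expansion of a set of models to a supersignature. -/
def expand {S' S : Set ℕ} (h : S' ⊆ S) (M' : Set (Itp S')) : Set (Itp S) :=
  {ω | ω.restrict h ∈ M'}

/-- An OCF over `S` is a ranking function attaining rank 0. -/
def IsOCF {S : Set ℕ} (κ : Itp S → ℕ) : Prop := ∃ ω, κ ω = 0

/-- The models (rank-0 interpretations) of an OCF. -/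
def OCFMod {S : Set ℕ} (κ : Itp S → ℕ) : Set (Itp S) := {ω | κ ω = 0}

/-- The belief set of an OCF over `S`. -/
def Bel (S : Set ℕ) (κ : Itp S → ℕ) : Set Fm :=
  {φ | φ ∈ Lang S ∧ ∀ ω ∈ OCFMod κ, ω.sat φ}

/-- Marginalisation of an OCF to a subsignature. -/
noncomputable def marg {S' S : Set ℕ} (h : S' ⊆ S) (κ : Itp S → ℕ) : Itp S' → ℕ :=
  fun ω' => sInf {n | ∃ ω : Itp S, ω.restrict h = ω' ∧ κ ω = n}

/-- Lifting of an OCF over `S'` to a supersignature `S`. -/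
def lift {S' S : Set ℕ} (h : S' ⊆ S) (κ' : Itp S' → ℕ) : Itp S → ℕ :=
  fun ω => κ' (ω.restrict h)

/-- Substitution of the atom `ρ` by formula `χ`. -/
def Fm.subst (ρ : ℕ) (χ : Fm) : Fm → Fm
  | var n => if n = ρ then χ else var n
  | top => top
  | bot => bot
  | neg φ => neg (subst ρ χ φ)
  | conj φ ψ => conj (subst ρ χ φ) (subst ρ χ ψ)
  | disj φ ψ => disj (subst ρ χ φ) (subst ρ χ ψ)

/-- Boole's atom forgetting: `forget(φ,ρ) = φ[ρ/⊤] ∨ φ[ρ/⊥]`. -/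
def boole (φ : Fm) (ρ : ℕ) : Fm := .disj (φ.subst ρ .top) (φ.subst ρ .bot)


lemma eval_congr (φ : Fm) (v w : ℕ → Bool) (h : ∀ n ∈ φ.atoms, v n = w n) :
    φ.eval v = φ.eval w := by
  induction φ with
  | var n => exact h n rfl
  | top => rfl
  | bot => rfl
  | neg φ ih => simp [Fm.eval, ih h]
  | conj φ ψ ih1 ih2 =>
      simp only [Fm.eval]
      rw [ih1 (fun n hn => h n (Or.inl hn)), ih2 (fun n hn => h n (Or.inr hn))]
  | disj φ ψ ih1 ih2 =>
      simp only [Fm.eval]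
      rw [ih1 (fun n hn => h n (Or.inl hn)), ih2 (fun n hn => h n (Or.inr hn))]

lemma sat_restrict {S' S : Set ℕ} (h : S' ⊆ S) (ω : Itp S) (φ : Fm)
    (hφ : φ ∈ Lang S') : ω.sat φ ↔ (ω.restrict h).sat φ := by
  unfold Itp.sat
  have : φ.eval ω.toVal = φ.eval (ω.restrict h).toVal := by
    apply eval_congr
    intro n hn
    have hn' : n ∈ S' := hφ hn
    simp [Itp.toVal, Itp.restrict, hn', h hn']
  rw [this]

lemma exists_ext {S' S : Set ℕ} (h : S' ⊆ S) (ω' : Itp S') :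
    ∃ ω : Itp S, ω.restrict h = ω' := by
  classical
  refine ⟨fun n => if hn : (n : ℕ) ∈ S' then ω' ⟨n, hn⟩ else false, ?_⟩
  funext n
  simp [Itp.restrict, n.2]

theorem stmt15 (S P : Set ℕ) (hS : S.Finite) (hP : P ⊆ S)
    (Γ : Set Fm) (hΓ : Γ ⊆ Lang S)
    (κ : Itp S → ℕ) (hκ : IsOCF κ)
    (hbel : OCFMod κ = Models S Γ) :
    Forget S Γ P = Bel (S \ P) (marg Set.diff_subset κ) := by
  have hsub : (S \ P : Set ℕ) ⊆ S := Set.diff_subset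
  ext φ
  constructor
  · rintro ⟨⟨hLS, hmod⟩, hLP⟩
    refine ⟨hLP, ?_⟩
    intro ω' hω'
    have hne : {n | ∃ ω : Itp S, ω.restrict hsub = ω' ∧ κ ω = n}.Nonempty := by
      obtain ⟨ω, hω⟩ := exists_ext hsub ω'
      exact ⟨κ ω, ω, hω, rfl⟩
    have hz : sInf {n | ∃ ω : Itp S, ω.restrict hsub = ω' ∧ κ ω = n} = 0 := hω'
    have h0 : (0 : ℕ) ∈ {n | ∃ ω : Itp S, ω.restrict hsub = ω' ∧ κ ω = n} := by
      rcases Nat.sInf_eq_zero.mp hz with h | h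
      · exact h
      · rw [h] at hne; exact absurd hne (by simp)
    obtain ⟨ω, hrest, hκ0⟩ := h0
    have hωmod : ω ∈ Models S Γ := by rw [← hbel]; exact hκ0
    have := hmod ω hωmod
    rw [← hrest]
    exact (sat_restrict hsub ω φ hLP).mp this
  · rintro ⟨hLP, hmod⟩
    refine ⟨⟨fun n hn => hsub (hLP hn), ?_⟩, hLP⟩
    intro ω hω
    have hκ0 : κ ω = 0 := by show ω ∈ OCFMod κ; rw [hbel]; exact hω
    have hm0 : marg hsub κ (ω.restrict hsub) = 0 := by
      apply Nat.eq_zero_of_le_zero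
      exact Nat.sInf_le ⟨ω, rfl, hκ0⟩
    have := hmod (ω.restrict hsub) hm0
    exact (sat_restrict hsub ω φ hLP).mpr this
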